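/- Let n ≥ 4, let I' be an order ideal of F₃(n) with max ⋃ I' = n, and let N' > 0 and ε₀ > 0 be real numbers. Then there exist real numbers 0 < t₁ < t₂ < ⋯ < t_n with t₁ < ε₀ such that ∏_{i∈f} t_i < N' for every f ∈ I', ∏_{i∈f} t_i > N' for every f ∈ F₃(n)∖I', and moreover t₁·t_{n−2}·t_{n−1}·t_n < N'. -/

import Mathlib

/-- The 4-element set `{i, i+1, j, j+1}`, denoted `(i,j)` in the paper. -/
def pairSet (i j : ℕ) : Finset ℕ := {i, i + 1, j, j + 1}

/-- Membership in the collection `F₃(n)` of 4-element subsets of `{1,…,n}`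
of the form `{i, i+1, j, j+1}` with `1 ≤ i`, `i+2 ≤ j`, `j+1 ≤ n`. -/
def memF3 (n : ℕ) (f : Finset ℕ) : Prop :=
  ∃ i j : ℕ, 1 ≤ i ∧ i + 2 ≤ j ∧ j + 1 ≤ n ∧ f = pairSet i j

/-- The partial order `⪯` on finite subsets of `ℕ` of equal cardinality:
componentwise comparison of the increasingly sorted lists of elements. -/
def squeezedLE (f g : Finset ℕ) : Prop :=
  List.Forall₂ (· ≤ ·) (f.sort (· ≤ ·)) (g.sort (· ≤ ·))

/-- `I` is an order ideal of `F₃(n)` w.r.t. `⪯`. -/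
def IsIdealF3 (n : ℕ) (I : Set (Finset ℕ)) : Prop :=
  (∀ f ∈ I, memF3 n f) ∧
  ∀ f g : Finset ℕ, memF3 n f → g ∈ I → squeezedLE f g → f ∈ I

/-- `max ⋃ I`, the largest vertex used by the collection `I`. -/
noncomputable def maxVertex (I : Set (Finset ℕ)) : ℕ :=
  sSup (⋃ f ∈ I, (f : Set ℕ))

/-- `0 * K = {{0} ∪ f : f ∈ K}`. -/
def coneZero (K : Set (Finset ℕ)) : Set (Finset ℕ) := (insert 0) '' K

/-- A facet of the squeezed sphere `S(I)`: a 4-element set contained in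
exactly one member of `I`. -/
def isFacetOfS (I : Set (Finset ℕ)) (F : Finset ℕ) : Prop :=
  F.card = 4 ∧ ∃! g, g ∈ I ∧ F ⊆ g

/-- The gap of `(i,j) = {i, i+1, j, j+1}`, i.e. `j - i - 2`. -/
def gapOf (f : Finset ℕ) : ℕ :=
  f.sup id - (f.sort (· ≤ ·)).headI - 3

/-!
With `t k = exp (s k + log N / 4)` the product of `t` over `(i,j)` is `N · exp (pairWeight s i j)`,
so one needs `s` increasing whose pair weights `s i + s (i+1) + s j + s (j+1)` are negative exactly
on the ideal. An order ideal of `F₃(n)` is a staircase: for some `M` every member `(i,j)` has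
`i + 2 ≤ M`, and for an antitone `C ≥ M` the pair `(i,j)` is a member iff `j ≤ C i`. Take
`s k = R ^ k` for `k ≥ M` and `s k = (k - M) R ^ (C k + 1)` for `k < M`, with `R ≥ 2M`; it is
increasing because `C` is antitone. For a member, `s i ≤ -2 R ^ (C i + 1)` outweighs
`s j + s (j+1) ≤ R ^ C i + R ^ (C i + 1)`; for a non-member, `j > C i` gives
`s j + s (j+1) ≥ R ^ (C i + 1) + R ^ (C i + 2)`, which outweighs
`s i + s (i+1) ≥ -2M R ^ (C i + 1)`.

Since `max ⋃ I = n` puts `(1, n-1)` in the ideal, every pair containing `1` is a member, so `t 1`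
can be made as small as we like; this gives `t 1 < ε₀` and `t 1 t_{n-2} t_{n-1} t_n < N`.
-/

open Finset Real

lemma mem_pairSet {i j x : ℕ} : x ∈ pairSet i j ↔ x = i ∨ x = i + 1 ∨ x = j ∨ x = j + 1 := by
  simp [pairSet]

lemma sort_pairSet {i j : ℕ} (h : i + 2 ≤ j) :
    (pairSet i j).sort (· ≤ ·) = [i, i + 1, j, j + 1] := by
  have hl : [i, i + 1, j, j + 1].Pairwise (· < ·) := List.isChain_iff_pairwise.1 <| by
    simp only [List.isChain_cons_cons, List.isChain_singleton, and_true]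
    omega
  rw [show pairSet i j = [i, i + 1, j, j + 1].toFinset by simp [pairSet],
    List.toFinset_sort _ hl.nodup]
  exact hl.imp le_of_lt

lemma pairSet_inj {i j i' j' : ℕ} (h : i + 2 ≤ j) (h' : i' + 2 ≤ j')
    (he : pairSet i j = pairSet i' j') : i = i' ∧ j = j' := by
  have h1 : i ∈ pairSet i' j' := he ▸ by simp [pairSet]
  have h2 : i' ∈ pairSet i j := he ▸ by simp [pairSet]
  have h3 : j + 1 ∈ pairSet i' j' := he ▸ by simp [pairSet]
  have h4 : j' + 1 ∈ pairSet i j := he ▸ by simp [pairSet]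
  rw [mem_pairSet] at h1 h2 h3 h4
  omega

lemma squeezedLE_pairSet {i j i' j' : ℕ} (h : i + 2 ≤ j) (h' : i' + 2 ≤ j')
    (hi : i ≤ i') (hj : j ≤ j') : squeezedLE (pairSet i j) (pairSet i' j') := by
  rw [squeezedLE, sort_pairSet h, sort_pairSet h']
  exact .cons hi (.cons (by omega) (.cons hj (.cons (by omega) .nil)))

lemma prod_pairSet {M : Type*} [CommMonoid M] (t : ℕ → M) {i j : ℕ} (h : i + 2 ≤ j) :
    ∏ x ∈ pairSet i j, t x = t i * t (i + 1) * t j * t (j + 1) := by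
  rw [pairSet, prod_insert (by simp only [mem_insert, mem_singleton]; omega),
    prod_insert (by simp only [mem_insert, mem_singleton]; omega), prod_insert (by simp),
    prod_singleton]
  simp only [mul_assoc]

-- The guard `i + 2 ≤ j` is needed since e.g. `pairSet 3 1 = pairSet 1 3`; an empty row gives `0`.
open Classical in
noncomputable def rowMax (n : ℕ) (I : Set (Finset ℕ)) (i : ℕ) : ℕ :=
  Nat.findGreatest (fun j => i + 2 ≤ j ∧ pairSet i j ∈ I) n

namespace IsIdealF3

variable {n : ℕ} {I : Set (Finset ℕ)}

lemma bounds_of_pairSet_mem (hI : IsIdealF3 n I) {i j : ℕ} (h : pairSet i j ∈ I)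
    (hij : i + 2 ≤ j) : 1 ≤ i ∧ j + 1 ≤ n := by
  obtain ⟨i', j', hi', hij', hj', he⟩ := hI.1 _ h
  obtain ⟨rfl, rfl⟩ := pairSet_inj hij hij' he
  exact ⟨hi', hj'⟩

lemma pairSet_mem_of_le (hI : IsIdealF3 n I) {i j i' j' : ℕ} (h : pairSet i' j' ∈ I)
    (hij' : i' + 2 ≤ j') (hi : 1 ≤ i) (hij : i + 2 ≤ j) (hii : i ≤ i') (hjj : j ≤ j') :
    pairSet i j ∈ I :=
  hI.2 _ _ ⟨i, j, hi, hij, by linarith [(hI.bounds_of_pairSet_mem h hij').2], rfl⟩ h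
    (squeezedLE_pairSet hij hij' hii hjj)

lemma pairSet_one_mem (hI : IsIdealF3 n I) (hn : 0 < n) (hmax : maxVertex I = n) :
    pairSet 1 (n - 1) ∈ I := by
  set S := ⋃ f ∈ I, (f : Set ℕ)
  have hmax' : sSup S = n := hmax
  have hS : BddAbove S := by
    refine ⟨n, ?_⟩
    simp only [S, mem_upperBounds, Set.mem_iUnion, mem_coe]
    rintro x ⟨f, hf, hx⟩
    obtain ⟨i, j, -, hij, hj, rfl⟩ := hI.1 f hf
    rw [mem_pairSet] at hx
    omega
  have hS' : S.Nonempty := by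
    rw [Set.nonempty_iff_ne_empty]
    rintro h
    rw [h, csSup_empty, bot_eq_zero'] at hmax'
    omega
  have hnS := hmax' ▸ Nat.sSup_mem hS' hS
  simp only [S, Set.mem_iUnion, mem_coe] at hnS
  obtain ⟨f, hf, hnf⟩ := hnS
  obtain ⟨i, j, hi, hij, hj, rfl⟩ := hI.1 f hf
  rw [mem_pairSet] at hnf
  exact hI.pairSet_mem_of_le hf hij le_rfl (by omega) hi (by omega)

lemma mem_of_one_mem (hI : IsIdealF3 n I) (hn : 0 < n) (hmax : maxVertex I = n) {f : Finset ℕ}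
    (hf : memF3 n f) (h1 : 1 ∈ f) : f ∈ I := by
  obtain ⟨i, j, hi, hij, hj, rfl⟩ := hf
  rw [mem_pairSet] at h1
  exact hI.pairSet_mem_of_le (hI.pairSet_one_mem hn hmax) (by omega) hi hij (by omega) (by omega)

lemma pairSet_mem_iff_le_rowMax (hI : IsIdealF3 n I) {i j : ℕ} (hi : 1 ≤ i) (hij : i + 2 ≤ j)
    (hj : j + 1 ≤ n) : pairSet i j ∈ I ↔ j ≤ rowMax n I i := by
  classical
  refine ⟨fun h => Nat.le_findGreatest (by omega) ⟨hij, h⟩, fun h => ?_⟩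
  obtain ⟨hic, hc⟩ := Nat.findGreatest_of_ne_zero (rfl : rowMax n I i = _) (by omega)
  exact hI.pairSet_mem_of_le hc hic hi hij le_rfl h

lemma antitoneOn_rowMax (hI : IsIdealF3 n I) : AntitoneOn (rowMax n I) (Set.Ici 1) := by
  classical
  intro a ha b _ hab
  by_cases h0 : rowMax n I b = 0
  · simp [h0]
  obtain ⟨hbc, hc⟩ := Nat.findGreatest_of_ne_zero (rfl : rowMax n I b = _) h0
  exact Nat.le_findGreatest (Nat.findGreatest_le n)
    ⟨by omega, hI.pairSet_mem_of_le hc hbc ha (by omega) hab le_rfl⟩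

lemma exists_staircase (hI : IsIdealF3 n I) : ∃ (M : ℕ) (C : ℕ → ℕ),
    AntitoneOn C (Set.Ici 1) ∧ (∀ k, M ≤ C k) ∧
    (∀ i j, i + 2 ≤ j → pairSet i j ∈ I → i + 2 ≤ M ∧ j ≤ C i) ∧
    (∀ i j, 1 ≤ i → i + 2 ≤ j → j + 1 ≤ n → pairSet i j ∉ I → C i < j) := by
  classical
  set m := Nat.findGreatest (fun i => pairSet i (i + 2) ∈ I) n
  refine ⟨m + 2, fun k => max (rowMax n I k) (m + 2),
    hI.antitoneOn_rowMax.max antitoneOn_const, fun k => le_max_right _ _, ?_, ?_⟩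
  · intro i j hij h
    obtain ⟨hi, hj⟩ := hI.bounds_of_pairSet_mem h hij
    have hdiag : pairSet i (i + 2) ∈ I := hI.pairSet_mem_of_le h hij hi le_rfl le_rfl hij
    exact ⟨Nat.add_le_add_right (Nat.le_findGreatest (by omega) hdiag) 2,
      le_max_of_le_left ((hI.pairSet_mem_iff_le_rowMax hi hij hj).1 h)⟩
  · intro i j hi hij hj h
    refine max_lt (not_le.1 (mt (hI.pairSet_mem_iff_le_rowMax hi hij hj).2 h)) ?_
    by_contra hjm
    have hdiag : pairSet m (m + 2) ∈ I := Nat.findGreatest_of_ne_zero (rfl : _ = m) (by omega)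
    exact h (hI.pairSet_mem_of_le hdiag le_rfl hi hij (by omega) (by omega))

end IsIdealF3

def pairWeight (s : ℕ → ℝ) (i j : ℕ) : ℝ := s i + s (i + 1) + s j + s (j + 1)

lemma prod_pairSet_exp (s : ℕ → ℝ) {N : ℝ} (hN : 0 < N) {i j : ℕ} (h : i + 2 ≤ j) :
    ∏ x ∈ pairSet i j, exp (s x + log N / 4) = N * exp (pairWeight s i j) := by
  rw [prod_pairSet _ h, ← exp_add, ← exp_add, ← exp_add, ← exp_log hN, ← exp_add, exp_log hN,
    pairWeight]
  ring_nf

noncomputable def stairWeight (M : ℕ) (C : ℕ → ℕ) (R : ℝ) (k : ℕ) : ℝ :=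
  if k < M then ((k : ℝ) - M) * R ^ (C k + 1) else R ^ k

section stairWeight

variable {M : ℕ} {C : ℕ → ℕ} {R : ℝ} {i j k : ℕ}

lemma stairWeight_of_lt (hk : k < M) : stairWeight M C R k = ((k : ℝ) - M) * R ^ (C k + 1) :=
  if_pos hk

lemma stairWeight_of_le (hk : M ≤ k) : stairWeight M C R k = R ^ k :=
  if_neg (not_lt.2 hk)

lemma stairWeight_neg (hR : 0 < R) (hk : k < M) : stairWeight M C R k < 0 := by
  rw [stairWeight_of_lt hk]
  exact mul_neg_of_neg_of_pos (by simpa using hk) (by positivity)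

lemma neg_mul_pow_le_stairWeight (hR : 0 ≤ R) : -(M * R ^ (C k + 1)) ≤ stairWeight M C R k := by
  rcases lt_or_ge k M with hk | hk
  · rw [stairWeight_of_lt hk, neg_mul_eq_neg_mul]
    have : (0 : ℝ) ≤ k := Nat.cast_nonneg k
    exact mul_le_mul_of_nonneg_right (by linarith) (by positivity)
  · rw [stairWeight_of_le hk]
    have : 0 ≤ (M : ℝ) * R ^ (C k + 1) := by positivity
    linarith [pow_nonneg hR k]

lemma pow_apply_succ_le_of_antitoneOn (hR : 1 ≤ R) (hC : AntitoneOn C (Set.Ici 1)) (hk : 1 ≤ k) :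
    R ^ (C (k + 1) + 1) ≤ R ^ (C k + 1) :=
  pow_le_pow_right₀ hR <| Nat.succ_le_succ <|
    hC (Set.mem_Ici.2 hk) (Set.mem_Ici.2 (by omega)) (by omega)

lemma stairWeight_lt_succ (hR : 1 < R) (hC : AntitoneOn C (Set.Ici 1)) (hk : 1 ≤ k) :
    stairWeight M C R k < stairWeight M C R (k + 1) := by
  rcases lt_or_ge (k + 1) M with hk1 | hk1
  · rw [stairWeight_of_lt (by omega), stairWeight_of_lt hk1]
    have hpow := pow_apply_succ_le_of_antitoneOn hR.le hC hk
    have hcoef : (k : ℝ) + 1 - M < 0 := by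
      have : ((k + 1 : ℕ) : ℝ) < M := by exact_mod_cast hk1
      push_cast at this
      linarith
    push_cast
    nlinarith [pow_pos (zero_lt_one.trans hR) (C k + 1)]
  rcases lt_or_ge k M with hk0 | hk0
  · rw [stairWeight_of_le hk1]
    exact (stairWeight_neg (by linarith) hk0).trans (by positivity)
  · rw [stairWeight_of_le hk0, stairWeight_of_le hk1]
    exact pow_lt_pow_right₀ hR k.lt_succ_self

lemma strictMonoOn_stairWeight (hR : 1 < R) (hC : AntitoneOn C (Set.Ici 1)) :
    StrictMonoOn (stairWeight M C R) (Set.Ici 1) :=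
  strictMonoOn_of_lt_add_one Set.ordConnected_Ici fun _ _ hk _ => stairWeight_lt_succ hR hC hk

lemma stairWeight_le_stairWeight (hR : 1 < R) (hC : AntitoneOn C (Set.Ici 1)) {a b : ℕ}
    (ha : 1 ≤ a) (hab : a ≤ b) : stairWeight M C R a ≤ stairWeight M C R b :=
  (strictMonoOn_stairWeight hR hC).monotoneOn ha (Set.mem_Ici.2 (ha.trans hab)) hab

lemma pairWeight_stairWeight_neg (hR : 1 < R) (hC : AntitoneOn C (Set.Ici 1))
    (hMC : ∀ k, M ≤ C k) (hi : i + 2 ≤ M) (hj : 1 ≤ j) (hjC : j ≤ C i) :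
    pairWeight (stairWeight M C R) i j < 0 := by
  have hwj := stairWeight_le_stairWeight (M := M) hR hC hj hjC
  have hwj1 := stairWeight_le_stairWeight (M := M) hR hC (by omega) (show j + 1 ≤ C i + 1 by omega)
  rw [stairWeight_of_le (hMC i)] at hwj
  rw [stairWeight_of_le (show M ≤ C i + 1 by linarith [hMC i])] at hwj1
  have hwi : stairWeight M C R i ≤ -2 * R ^ (C i + 1) := by
    rw [stairWeight_of_lt (by omega)]
    have : (i : ℝ) + 2 ≤ M := by exact_mod_cast hi
    exact mul_le_mul_of_nonneg_right (by linarith) (by positivity)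
  have hwi1 := stairWeight_neg (C := C) (zero_lt_one.trans hR) (show i + 1 < M by omega)
  have hpow : R ^ C i ≤ R ^ (C i + 1) := pow_le_pow_right₀ hR.le (Nat.le_succ _)
  rw [pairWeight]
  linarith

lemma pairWeight_stairWeight_pos (hR : 1 < R) (hRM : 2 * M ≤ R)
    (hC : AntitoneOn C (Set.Ici 1)) (hMC : ∀ k, M ≤ C k) (hi : 1 ≤ i) (hj : C i < j) :
    0 < pairWeight (stairWeight M C R) i j := by
  have hwj := stairWeight_le_stairWeight (M := M) hR hC (by omega) (show C i + 1 ≤ j from hj)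
  have hwj1 := stairWeight_le_stairWeight (M := M) hR hC (by omega) (show C i + 2 ≤ j + 1 by omega)
  rw [stairWeight_of_le (show M ≤ C i + 1 by linarith [hMC i])] at hwj
  rw [stairWeight_of_le (show M ≤ C i + 2 by linarith [hMC i]), pow_succ] at hwj1
  have hwi := neg_mul_pow_le_stairWeight (M := M) (C := C) (k := i) (zero_le_one.trans hR.le)
  have hwi1 := neg_mul_pow_le_stairWeight (M := M) (C := C) (k := i + 1) (zero_le_one.trans hR.le)
  have hpow := pow_apply_succ_le_of_antitoneOn hR.le hC hi
  have hM : (0 : ℝ) ≤ M := Nat.cast_nonneg M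
  have hpos : 0 < R ^ (C i + 1) := pow_pos (zero_lt_one.trans hR) _
  rw [pairWeight]
  nlinarith [mul_le_mul_of_nonneg_left hpow hM]

end stairWeight

structure IsRealization (n : ℕ) (I : Set (Finset ℕ)) (N : ℝ) (t : ℕ → ℝ) : Prop where
  pos : ∀ k, 0 < t k
  lt_succ : ∀ i, 1 ≤ i → i < n → t i < t (i + 1)
  prod_lt : ∀ f ∈ I, ∏ i ∈ f, t i < N
  lt_prod : ∀ f, memF3 n f → f ∉ I → N < ∏ i ∈ f, t i

theorem IsIdealF3.exists_isRealization {n : ℕ} {I : Set (Finset ℕ)} (hI : IsIdealF3 n I)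
    {N : ℝ} (hN : 0 < N) : ∃ t, IsRealization n I N t := by
  obtain ⟨M, C, hC, hMC, hmem, hnot⟩ := hI.exists_staircase
  set R : ℝ := 2 * M + 2
  have hR : 1 < R := by linarith [(Nat.cast_nonneg M : (0 : ℝ) ≤ M)]
  have hRM : 2 * (M : ℝ) ≤ R := by linarith
  refine ⟨fun k => exp (stairWeight M C R k + log N / 4),
    ⟨fun k => exp_pos _, fun i hi _ => ?_, fun f hf => ?_, fun f hf hfI => ?_⟩⟩
  · exact exp_lt_exp.2 (add_lt_add_left (stairWeight_lt_succ hR hC hi) _)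
  · obtain ⟨i, j, hi, hij, hj, rfl⟩ := hI.1 f hf
    obtain ⟨hiM, hjC⟩ := hmem i j hij hf
    rw [prod_pairSet_exp _ hN hij]
    exact mul_lt_of_lt_one_right hN
      (exp_lt_one_iff.2 (pairWeight_stairWeight_neg hR hC hMC hiM (by omega) hjC))
  · obtain ⟨i, j, hi, hij, hj, rfl⟩ := hf
    rw [prod_pairSet_exp _ hN hij]
    exact lt_mul_of_one_lt_right hN
      (one_lt_exp_iff.2 (pairWeight_stairWeight_pos hR hRM hC hMC hi (hnot i j hi hij hj hfI)))

theorem IsRealization.update_one {n : ℕ} {I : Set (Finset ℕ)} {N δ : ℝ} {t : ℕ → ℝ}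
    (ht : IsRealization n I N t) (hδ : 0 < δ) (hδt : δ < t 1)
    (h1 : ∀ f, memF3 n f → 1 ∈ f → f ∈ I) : IsRealization n I N (Function.update t 1 δ) := by
  have hle : Function.update t 1 δ ≤ t := update_le_iff.2 ⟨hδt.le, fun _ _ => le_rfl⟩
  have hpos : ∀ k, 0 < Function.update t 1 δ k := by
    intro k
    rcases eq_or_ne k 1 with rfl | hk
    · simpa using hδ
    · simpa [hk] using ht.pos k
  refine ⟨hpos, fun i hi hin => ?_, fun f hf => ?_, fun f hf hfI => ?_⟩
  · rcases eq_or_ne i 1 with rfl | hi1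
    · simpa using hδt.trans (ht.lt_succ 1 le_rfl hin)
    · rw [Function.update_of_ne hi1, Function.update_of_ne (by omega)]
      exact ht.lt_succ i hi hin
  · exact (prod_le_prod (fun k _ => (hpos k).le) (fun k _ => hle k)).trans_lt (ht.prod_lt f hf)
  · rw [prod_update_of_notMem (fun h => hfI (h1 f hf h))]
    exact ht.lt_prod f hf hfI

/-- **Step 1 and Step 2 of the realization.** For any order ideal `I'` of
`F₃(n)` with `max ⋃ I' = n` and any `N' > 0`, `ε₀ > 0`, there are reals
`0 < t₁ < t₂ < ⋯ < t_n` with `t₁ < ε₀` such that `∏_{i ∈ f} t_i < N'` for all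
`f ∈ I'`, `∏_{i ∈ f} t_i > N'` for all `f ∈ F₃(n) ∖ I'`, and moreover
`t₁ t_{n-2} t_{n-1} t_n < N'`. -/
theorem realization_step_one_two (n : ℕ) (hn : 4 ≤ n)
    (I : Set (Finset ℕ)) (hI : IsIdealF3 n I) (hmax : maxVertex I = n)
    (N' ε₀ : ℝ) (hN' : 0 < N') (hε₀ : 0 < ε₀) :
    ∃ t : ℕ → ℝ, 0 < t 1 ∧ (∀ i : ℕ, 1 ≤ i → i < n → t i < t (i + 1)) ∧
      t 1 < ε₀ ∧
      (∀ f ∈ I, (∏ i ∈ f, t i) < N') ∧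
      (∀ f : Finset ℕ, memF3 n f → f ∉ I → N' < ∏ i ∈ f, t i) ∧
      t 1 * t (n - 2) * t (n - 1) * t n < N' := by
  obtain ⟨t, ht⟩ := hI.exists_isRealization hN'
  set P := t (n - 2) * t (n - 1) * t n
  have hP : 0 < P := mul_pos (mul_pos (ht.pos _) (ht.pos _)) (ht.pos _)
  obtain ⟨δ, hδ, hδ_lt⟩ := exists_between (lt_min (ht.pos 1) (lt_min hε₀ (div_pos hN' hP)))
  obtain ⟨hδt, hδε, hδP⟩ : δ < t 1 ∧ δ < ε₀ ∧ δ < N' / P := by simpa only [lt_min_iff] using hδ_lt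
  have ht' := ht.update_one hδ hδt fun f hf => hI.mem_of_one_mem (by omega) hmax hf
  refine ⟨Function.update t 1 δ, ht'.pos 1, ht'.lt_succ, by simpa using hδε, ht'.prod_lt,
    ht'.lt_prod, ?_⟩
  rw [Function.update_self, Function.update_of_ne (show n - 2 ≠ 1 by omega),
    Function.update_of_ne (show n - 1 ≠ 1 by omega), Function.update_of_ne (show n ≠ 1 by omega),
    show δ * t (n - 2) * t (n - 1) * t n = δ * P by ring]
  exact (lt_div_iff₀ hP).1 hδP
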